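/- Let α > 1 be irrational and S_α the set of sums avoided by the partition {A_α, B_α} of ℕ⁺ given by the sign of E(n) = n − (nearest integer multiple of α). Then S_α is uniquely avoidable: {A_α, B_α} is the only partition of ℕ⁺ avoiding S_α. -/

import Mathlib

/-!
Put `θ = α⁻¹`. Then `n ∈ A_α` exactly when `{nθ} > 1/2`. The partition avoids `S_α` by
definition, and it is the only one once the graph joining `x ≠ y` with `x + y ∈ S_α` is connected.
Membership in `S_α` is controlled by `v(x) = {2xθ}`: a sum `s` with `{sθ} < 1/2` lies in `S_α` as
soon as `v(s)` is smaller than every `v(x)`, `x < s`. Along the continued-fraction recursion for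
`2θ` we follow pairs `p, q` at which `v` is extremal below `p + q`; this puts sums such as `p + q`,
`2p`, `2q` into `S_α`. Two elements `s` and `s + d` of `S_α` join every `z ≤ s` to `z - d` through
`s + d - z`, so connectivity below `d` spreads up to `s + d`, and the recursion makes this cover
all of `ℕ⁺`. Replacing `θ` by `-θ` swaps `A_α` and `B_α` and fixes `S_α`, which halves every case
analysis.
-/

/-- `E α n` is the error `n - qα` where `qα` is the integer multiple of `α`
nearest to `n` (for `α > 1`, this multiple is `round (n/α) * α`). -/
noncomputable def E (α : ℝ) (n : ℕ) : ℝ := (n : ℝ) - round ((n : ℝ) / α) * α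

/-- `A_α`: positive integers whose nearest multiple of `α` exceeds them. -/
def Aset (α : ℝ) : Set ℕ := {n | 0 < n ∧ E α n < 0}

/-- `B_α`: positive integers whose nearest multiple of `α` is below them. -/
def Bset (α : ℝ) : Set ℕ := {n | 0 < n ∧ 0 < E α n}

/-- `S_α`: positive integers not expressible as a sum of two distinct elements
of `A_α` nor of two distinct elements of `B_α`. -/
def Sset (α : ℝ) : Set ℕ :=
  {s | 0 < s ∧ (∀ x ∈ Aset α, ∀ y ∈ Aset α, x ≠ y → x + y ≠ s) ∧
       (∀ x ∈ Bset α, ∀ y ∈ Bset α, x ≠ y → x + y ≠ s)}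
/-- The graph `G S` on the positive integers with an edge between distinct
`x, y` whenever `x + y ∈ S`. -/
def G (S : Set ℕ+) : SimpleGraph ℕ+ where
  Adj x y := x ≠ y ∧ x + y ∈ S
  symm := by
    constructor
    intro x y h
    exact ⟨h.1.symm, by rw [add_comm]; exact h.2⟩
  loopless := by
    constructor
    intro x h
    exact h.1 rfl

/-- The partition `{A, Aᶜ}` of `ℕ+` avoids `S`: no two distinct elements of
the same part sum to an element of `S`. -/
def Avoids (A S : Set ℕ+) : Prop :=
  (∀ x ∈ A, ∀ y ∈ A, x ≠ y → x + y ∉ S) ∧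
  (∀ x ∈ Aᶜ, ∀ y ∈ Aᶜ, x ≠ y → x + y ∉ S)

/-- `S` is avoidable: some partition of `ℕ+` avoids it. -/
def Avoidable (S : Set ℕ+) : Prop := ∃ A, Avoids A S

/-- `S` is uniquely avoidable: exactly one partition of `ℕ+` avoids it. -/
def UniquelyAvoidable (S : Set ℕ+) : Prop :=
  ∃ A, Avoids A S ∧ ∀ A', Avoids A' S → A' = A ∨ A' = Aᶜ

/-- `A_α` as a set of positive integers. -/
noncomputable def AsetP (α : ℝ) : Set ℕ+ := {n | E α (n : ℕ) < 0}

/-- `S_α` as a set of positive integers: sums avoided by `{A_α, B_α}`. -/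
noncomputable def SsetP (α : ℝ) : Set ℕ+ :=
  {s | (∀ x ∈ AsetP α, ∀ y ∈ AsetP α, x ≠ y → x + y ≠ s) ∧
       (∀ x ∉ AsetP α, ∀ y ∉ AsetP α, x ≠ y → x + y ≠ s)}

theorem Avoids.mem_iff_notMem_of_adj {A S : Set ℕ+} (hA : Avoids A S) {x y : ℕ+}
    (hxy : (G S).Adj x y) : x ∈ A ↔ y ∉ A :=
  ⟨fun hx hy => hA.1 x hx y hy hxy.1 hxy.2,
    fun hy => by_contra fun hx => hA.2 x hx y hy hxy.1 hxy.2⟩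

theorem Avoids.eq_or_eq_compl {A A' S : Set ℕ+} (hA : Avoids A S) (hA' : Avoids A' S)
    (hS : (G S).Connected) : A' = A ∨ A' = Aᶜ := by
  have agree_iff : ∀ z, (1 ∈ A' ↔ 1 ∈ A) ↔ (z ∈ A' ↔ z ∈ A) := by
    intro z
    induction (SimpleGraph.reachable_iff_reflTransGen 1 z).1 (hS.preconnected 1 z) with
    | refl => rfl
    | tail _ hadj ih =>
      rw [ih, hA.mem_iff_notMem_of_adj hadj, hA'.mem_iff_notMem_of_adj hadj]
      tauto
  by_cases h1 : 1 ∈ A' ↔ 1 ∈ A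
  · exact Or.inl (Set.ext fun z => (agree_iff z).1 h1)
  · exact Or.inr (Set.ext fun z => by have := agree_iff z; simp only [Set.mem_compl_iff]; tauto)

theorem avoids_AsetP_SsetP (α : ℝ) : Avoids (AsetP α) (SsetP α) :=
  ⟨fun x hx y hy hxy hs => hs.1 x hx y hy hxy rfl, fun x hx y hy hxy hs => hs.2 x hx y hy hxy rfl⟩

namespace NearestMultiple

noncomputable def fractMul (θ : ℝ) (x : ℕ) : ℝ := Int.fract (x * θ)

section FractMul

variable {θ : ℝ} {x y : ℕ}

lemma fractMul_nonneg : 0 ≤ fractMul θ x := Int.fract_nonneg _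

lemma fractMul_lt_one : fractMul θ x < 1 := Int.fract_lt_one _

lemma fractMul_add_of_lt (h : fractMul θ x + fractMul θ y < 1) :
    fractMul θ (x + y) = fractMul θ x + fractMul θ y := by
  unfold fractMul at *
  rw [Int.fract_eq_iff]
  refine ⟨add_nonneg (Int.fract_nonneg _) (Int.fract_nonneg _), h,
    ⌊(x : ℝ) * θ⌋ + ⌊(y : ℝ) * θ⌋, ?_⟩
  push_cast
  unfold Int.fract
  ring

lemma fractMul_add_of_le (h : 1 ≤ fractMul θ x + fractMul θ y) :
    fractMul θ (x + y) = fractMul θ x + fractMul θ y - 1 := by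
  unfold fractMul at *
  rw [Int.fract_eq_iff]
  refine ⟨by linarith, by linarith [Int.fract_lt_one ((x : ℝ) * θ), Int.fract_lt_one ((y : ℝ) * θ)],
    ⌊(x : ℝ) * θ⌋ + ⌊(y : ℝ) * θ⌋ + 1, ?_⟩
  push_cast
  unfold Int.fract
  ring

variable (hθ : Irrational θ)
include hθ

lemma irrational_two_mul : Irrational (2 * θ) := by
  simpa using hθ.natCast_mul two_ne_zero

lemma fractMul_pos (hx : 0 < x) : 0 < fractMul θ x :=
  Int.fract_pos.2 ((hθ.natCast_mul hx.ne').ne_int _)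

lemma fractMul_neg (hx : 0 < x) : fractMul (-θ) x = 1 - fractMul θ x := by
  unfold fractMul
  rw [mul_neg, Int.fract_neg (fractMul_pos hθ hx).ne']

lemma fractMul_two_mul_neg (hx : 0 < x) : fractMul (2 * -θ) x = 1 - fractMul (2 * θ) x := by
  rw [mul_neg, fractMul_neg (irrational_two_mul hθ) hx]

lemma fractMul_add_ne_one (hx : 0 < x) : fractMul θ x + fractMul θ y ≠ 1 := by
  intro h
  have hsum := fractMul_add_of_le (θ := θ) h.ge
  have hpos := fractMul_pos hθ (Nat.add_pos_left hx y)
  linarith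

lemma fractMul_ne_half (hx : 0 < x) : fractMul θ x ≠ 1 / 2 := by
  intro h
  apply (hθ.natCast_mul (Nat.mul_ne_zero two_ne_zero hx.ne')).ne_int (2 * ⌊(x : ℝ) * θ⌋ + 1)
  have := Int.floor_add_fract ((x : ℝ) * θ)
  unfold fractMul at h
  push_cast
  linear_combination (-2) * this + 2 * h

end FractMul

def IsUpper (θ : ℝ) (x : ℕ) : Prop := 1 / 2 < fractMul θ x

section IsUpper

variable {θ : ℝ} {x p q : ℕ}

lemma fractMul_two_mul_of_isUpper (h : IsUpper θ x) :
    fractMul (2 * θ) x = 2 * fractMul θ x - 1 := by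
  unfold IsUpper fractMul at *
  rw [Int.fract_eq_iff]
  refine ⟨by linarith, by linarith [Int.fract_lt_one ((x : ℝ) * θ)], 2 * ⌊(x : ℝ) * θ⌋ + 1, ?_⟩
  have := Int.floor_add_fract ((x : ℝ) * θ)
  push_cast
  linear_combination (-2) * this

variable (hθ : Irrational θ)
include hθ

lemma fractMul_lt_half (hx : 0 < x) (h : ¬ IsUpper θ x) : fractMul θ x < 1 / 2 :=
  (not_lt.1 h).lt_of_ne (fractMul_ne_half hθ hx)

lemma fractMul_two_mul_of_not_isUpper (hx : 0 < x) (h : ¬ IsUpper θ x) :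
    fractMul (2 * θ) x = 2 * fractMul θ x := by
  have hlt := fractMul_lt_half hθ hx h
  unfold fractMul at *
  rw [Int.fract_eq_iff]
  refine ⟨by linarith [Int.fract_nonneg ((x : ℝ) * θ)], by linarith, 2 * ⌊(x : ℝ) * θ⌋, ?_⟩
  have := Int.floor_add_fract ((x : ℝ) * θ)
  push_cast
  linear_combination (-2) * this

lemma isUpper_neg_iff (hx : 0 < x) : IsUpper (-θ) x ↔ ¬ IsUpper θ x := by
  unfold IsUpper
  rw [fractMul_neg hθ hx]
  constructor
  · intro h h'
    linarith
  · intro h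
    linarith [fractMul_lt_half hθ hx h]

lemma not_isUpper_add_of_isUpper_of_one_lt (hq : 0 < q) (hp' : IsUpper θ p)
    (hq' : ¬ IsUpper θ q) (h : 1 < fractMul (2 * θ) p + fractMul (2 * θ) q) :
    ¬ IsUpper θ (p + q) := by
  rw [fractMul_two_mul_of_isUpper hp', fractMul_two_mul_of_not_isUpper hθ hq hq'] at h
  have hq1 := fractMul_lt_half hθ hq hq'
  have hp1 := fractMul_lt_one (θ := θ) (x := p)
  unfold IsUpper
  rw [fractMul_add_of_le (by linarith)]
  linarith

lemma isUpper_add_of_not_isUpper_of_one_lt (hp : 0 < p) (hq : 0 < q) (hp' : ¬ IsUpper θ p)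
    (hq' : ¬ IsUpper θ q) (h : 1 < fractMul (2 * θ) p + fractMul (2 * θ) q) :
    IsUpper θ (p + q) := by
  rw [fractMul_two_mul_of_not_isUpper hθ hp hp', fractMul_two_mul_of_not_isUpper hθ hq hq'] at h
  have hp1 := fractMul_lt_half hθ hp hp'
  have hq1 := fractMul_lt_half hθ hq hq'
  unfold IsUpper
  rw [fractMul_add_of_lt (by linarith)]
  linarith

lemma not_isUpper_add_of_not_isUpper_of_lt_one (hp : 0 < p) (hq : 0 < q) (hp' : ¬ IsUpper θ p)
    (hq' : ¬ IsUpper θ q) (h : fractMul (2 * θ) p + fractMul (2 * θ) q < 1) :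
    ¬ IsUpper θ (p + q) := by
  rw [fractMul_two_mul_of_not_isUpper hθ hp hp', fractMul_two_mul_of_not_isUpper hθ hq hq'] at h
  unfold IsUpper
  rw [fractMul_add_of_lt (by linarith)]
  linarith

end IsUpper

def IsAvoidedSum (θ : ℝ) (s : ℕ) : Prop :=
  0 < s ∧ ∀ x y : ℕ, 0 < x → 0 < y → x ≠ y → x + y = s →
    ¬(IsUpper θ x ∧ IsUpper θ y) ∧ ¬(¬IsUpper θ x ∧ ¬IsUpper θ y)

section IsAvoidedSum

variable {θ : ℝ} {s : ℕ}

lemma isAvoidedSum_two : IsAvoidedSum θ 2 :=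
  ⟨two_pos, fun x y hx hy hxy hsum => absurd hsum (by omega)⟩

variable (hθ : Irrational θ)
include hθ

lemma isAvoidedSum_neg_iff : IsAvoidedSum (-θ) s ↔ IsAvoidedSum θ s := by
  constructor <;> rintro ⟨hs, h⟩ <;> refine ⟨hs, fun x y hx hy hxy hsum => ?_⟩ <;>
    have := h x y hx hy hxy hsum <;>
    simp only [isUpper_neg_iff hθ hx, isUpper_neg_iff hθ hy] at this ⊢ <;> tauto

-- If `s = x + y` with `x, y` in the same class, then `{2sθ} - {2xθ}` is `2{yθ} - 1` or `2{yθ}`,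
-- both positive.
lemma isAvoidedSum_of_forall_fractMul_lt (hs : 0 < s) (hs' : ¬ IsUpper θ s)
    (hmin : ∀ x, 0 < x → x < s → 2 * x ≠ s → fractMul (2 * θ) s < fractMul (2 * θ) x) :
    IsAvoidedSum θ s := by
  have hvs := fractMul_two_mul_of_not_isUpper hθ hs hs'
  refine ⟨hs, fun x y hx hy hxy hsum => ⟨?_, ?_⟩⟩
  · rintro ⟨hx', hy'⟩
    have hfs : fractMul θ s = fractMul θ x + fractMul θ y - 1 := by
      rw [← hsum]
      exact fractMul_add_of_le (by unfold IsUpper at hx' hy'; linarith)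
    have := hmin x hx (by omega) (by omega)
    rw [hvs, fractMul_two_mul_of_isUpper hx', hfs] at this
    unfold IsUpper at hy'
    linarith
  · rintro ⟨hx', hy'⟩
    have hfs : fractMul θ s = fractMul θ x + fractMul θ y := by
      rw [← hsum]
      exact fractMul_add_of_lt
        (by linarith [fractMul_lt_half hθ hx hx', fractMul_lt_half hθ hy hy'])
    have := hmin x hx (by omega) (by omega)
    rw [hvs, fractMul_two_mul_of_not_isUpper hθ hx hx', hfs] at this
    linarith [fractMul_pos hθ hy]

end IsAvoidedSum

-- `{xβ}` is smallest at `p` and largest at `q` on `[1, p + q)`: consecutive one-sided best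
-- approximations of `β`, with `p = q` only for the starting pair `(1, 1)`.
structure IsExtremalPair (β : ℝ) (p q : ℕ) : Prop where
  left_pos : 0 < p
  right_pos : 0 < q
  eq_or_lt : p = q ∨ fractMul β p < fractMul β q
  between : ∀ x, 0 < x → x < p + q → x ≠ p → x ≠ q →
    fractMul β p < fractMul β x ∧ fractMul β x < fractMul β q

namespace IsExtremalPair

variable {β : ℝ} {p q : ℕ}

lemma one_one : IsExtremalPair β 1 1 :=
  ⟨one_pos, one_pos, Or.inl rfl, fun x hx hlt hx1 _ => by omega⟩

lemma fractMul_le (h : IsExtremalPair β p q) : fractMul β p ≤ fractMul β q := by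
  rcases h.eq_or_lt with rfl | hlt
  · rfl
  · exact hlt.le

lemma two_mul_fractMul_lt (h : IsExtremalPair β p q) (hsum : fractMul β p + fractMul β q < 1)
    (hq : 2 * fractMul β p < fractMul β q) {x : ℕ} (hx : 0 < x) (hx2 : x < 2 * p)
    (hxp : x ≠ p) : 2 * fractMul β p < fractMul β x := by
  by_contra! hcon
  rcases eq_or_ne x q with rfl | hxq
  · linarith
  rcases eq_or_ne x (p + q) with rfl | hxpq
  · rw [fractMul_add_of_lt hsum] at hcon
    linarith [fractMul_nonneg (θ := β) (x := p)]
  rcases lt_or_gt_of_ne hxp with hlt | hgt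
  · have hw : (p - x) + x = p := by omega
    rcases le_or_gt 1 (fractMul β (p - x) + fractMul β x) with hc | hc
    · have hval := fractMul_add_of_le hc
      rw [hw] at hval
      have hwq : fractMul β (p - x) ≤ fractMul β q := by
        rcases eq_or_ne (p - x) q with hwq | hwq
        · rw [hwq]
        · exact (h.between (p - x) (by omega) (by omega) (by omega) hwq).2.le
      linarith
    · have hval := fractMul_add_of_lt hc
      rw [hw] at hval
      linarith [fractMul_nonneg (θ := β) (x := p - x), (h.between x hx (by omega) hxp hxq).1]
  · have hy := h.between (x - p) (by omega) (by omega) (by omega) (by omega)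
    have hw : p + (x - p) = x := by omega
    rcases le_or_gt 1 (fractMul β p + fractMul β (x - p)) with hc | hc
    · have hval := fractMul_add_of_le hc
      rw [hw] at hval
      linarith [fractMul_nonneg (θ := β) (x := x)]
    · have hval := fractMul_add_of_lt hc
      rw [hw] at hval
      linarith

variable (hβ : Irrational β)
include hβ

lemma neg (h : IsExtremalPair β p q) : IsExtremalPair (-β) q p where
  left_pos := h.right_pos
  right_pos := h.left_pos
  eq_or_lt := by
    rw [fractMul_neg hβ h.left_pos, fractMul_neg hβ h.right_pos]
    rcases h.eq_or_lt with heq | hlt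
    · exact Or.inl heq.symm
    · exact Or.inr (by linarith)
  between x hx hlt hxq hxp := by
    have := h.between x hx (by omega) hxp hxq
    rw [fractMul_neg hβ h.left_pos, fractMul_neg hβ h.right_pos, fractMul_neg hβ hx]
    constructor <;> linarith [this.1, this.2]

lemma add_right (h : IsExtremalPair β p q) (hsum : fractMul β p + fractMul β q < 1) :
    IsExtremalPair β p (p + q) := by
  have hp := h.left_pos
  have hvq := fractMul_pos hβ h.right_pos
  have hvpq := fractMul_add_of_lt hsum
  refine ⟨hp, by omega, Or.inr (by linarith), fun x hx hlt hxp hxpq => ?_⟩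
  rw [hvpq]
  rcases lt_or_gt_of_ne hxpq with hc | hc
  · rcases eq_or_ne x q with rfl | hxq
    · exact ⟨h.eq_or_lt.resolve_left (Ne.symm hxp), by linarith [fractMul_pos hβ hp]⟩
    · have := h.between x hx hc hxp hxq
      exact ⟨this.1, by linarith [fractMul_pos hβ hp]⟩
  · have hw : p + (x - p) = x := by omega
    have hw0 : 0 < x - p := by omega
    have hw_lt : fractMul β (x - p) < fractMul β q := by
      rcases eq_or_ne (x - p) p with hwp | hwp
      · rw [hwp]
        exact h.eq_or_lt.resolve_left (by omega)
      · exact (h.between (x - p) hw0 (by omega) hwp (by omega)).2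
    have hval := fractMul_add_of_lt (θ := β) (x := p) (y := x - p) (by linarith)
    rw [hw] at hval
    exact ⟨by linarith [fractMul_pos hβ hw0], by linarith⟩

lemma neg_iff : IsExtremalPair (-β) p q ↔ IsExtremalPair β q p :=
  ⟨fun h => by simpa using h.neg hβ.neg, fun h => h.neg hβ⟩

lemma add_left (h : IsExtremalPair β p q) (hsum : 1 < fractMul β p + fractMul β q) :
    IsExtremalPair β (p + q) q := by
  have h' := (h.neg hβ).add_right hβ.neg
    (by rw [fractMul_neg hβ h.right_pos, fractMul_neg hβ h.left_pos]; linarith)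
  rwa [Nat.add_comm q p, neg_iff hβ] at h'

end IsExtremalPair

section ExtremalSums

variable {θ : ℝ} {p q : ℕ} (hθ : Irrational θ)
include hθ

lemma IsExtremalPair.two_mul_neg (h : IsExtremalPair (2 * θ) p q) :
    IsExtremalPair (2 * -θ) q p := by
  rw [mul_neg]
  exact h.neg (irrational_two_mul hθ)

lemma isAvoidedSum_two_mul_left (h : IsExtremalPair (2 * θ) p q)
    (hsum : fractMul (2 * θ) p + fractMul (2 * θ) q < 1)
    (hq : 2 * fractMul (2 * θ) p < fractMul (2 * θ) q) : IsAvoidedSum θ (2 * p) := by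
  have hp := h.left_pos
  have hq1 := fractMul_lt_one (θ := 2 * θ) (x := q)
  have hfrac : fractMul θ (2 * p) = fractMul (2 * θ) p := by
    unfold fractMul
    push_cast
    ring_nf
  have hdouble : fractMul (2 * θ) (2 * p) = 2 * fractMul (2 * θ) p := by
    rw [two_mul p, fractMul_add_of_lt (by linarith)]
    ring
  refine isAvoidedSum_of_forall_fractMul_lt hθ (by omega)
    (by unfold IsUpper; rw [hfrac]; linarith) fun x hx hlt h2x => ?_
  rw [hdouble]
  exact h.two_mul_fractMul_lt hsum hq hx hlt (by omega)

lemma isAvoidedSum_two_mul_right (h : IsExtremalPair (2 * θ) p q)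
    (hsum : 1 < fractMul (2 * θ) p + fractMul (2 * θ) q)
    (hp : fractMul (2 * θ) p < 2 * fractMul (2 * θ) q - 1) : IsAvoidedSum θ (2 * q) := by
  have h' := h.two_mul_neg hθ
  rw [← isAvoidedSum_neg_iff hθ]
  apply isAvoidedSum_two_mul_left hθ.neg h' <;>
    rw [fractMul_two_mul_neg hθ h.left_pos, fractMul_two_mul_neg hθ h.right_pos] <;> linarith

lemma isAvoidedSum_add_of_one_lt (h : IsExtremalPair (2 * θ) p q) (hp : IsUpper θ p)
    (hq : ¬ IsUpper θ q) (hsum : 1 < fractMul (2 * θ) p + fractMul (2 * θ) q) :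
    IsAvoidedSum θ (p + q) := by
  have hv := fractMul_add_of_le hsum.le
  refine isAvoidedSum_of_forall_fractMul_lt hθ (Nat.add_pos_left h.left_pos q)
    (not_isUpper_add_of_isUpper_of_one_lt hθ h.right_pos hp hq hsum) fun x hx hlt _ => ?_
  rw [hv]
  have hp1 := fractMul_lt_one (θ := 2 * θ) (x := p)
  have hq1 := fractMul_lt_one (θ := 2 * θ) (x := q)
  rcases eq_or_ne x p with rfl | hxp
  · linarith
  rcases eq_or_ne x q with rfl | hxq
  · linarith
  linarith [(h.between x hx hlt hxp hxq).1]

lemma isAvoidedSum_add (h : IsExtremalPair (2 * θ) p q) (hp : IsUpper θ p)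
    (hq : ¬ IsUpper θ q) : IsAvoidedSum θ (p + q) := by
  rcases lt_or_gt_of_ne (fractMul_add_ne_one (irrational_two_mul hθ) h.left_pos (y := q))
    with hlt | hgt
  · have h' := h.two_mul_neg hθ
    rw [← isAvoidedSum_neg_iff hθ, Nat.add_comm]
    refine isAvoidedSum_add_of_one_lt hθ.neg h' ((isUpper_neg_iff hθ h.right_pos).2 hq)
      (by rw [isUpper_neg_iff hθ h.left_pos]; exact not_not.2 hp) ?_
    rw [fractMul_two_mul_neg hθ h.left_pos, fractMul_two_mul_neg hθ h.right_pos]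
    linarith
  · exact isAvoidedSum_add_of_one_lt hθ h hp hq hgt

end ExtremalSums

def sumGraph (θ : ℝ) : SimpleGraph ℕ where
  Adj x y := 0 < x ∧ 0 < y ∧ x ≠ y ∧ IsAvoidedSum θ (x + y)
  symm := ⟨fun _ _ h => ⟨h.2.1, h.1, h.2.2.1.symm, by rw [Nat.add_comm]; exact h.2.2.2⟩⟩
  loopless := ⟨fun _ h => h.2.2.1 rfl⟩

section SumGraph

variable {θ : ℝ} {s d : ℕ}

lemma sumGraph_adj {x y : ℕ} :
    (sumGraph θ).Adj x y ↔ 0 < x ∧ 0 < y ∧ x ≠ y ∧ IsAvoidedSum θ (x + y) :=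
  Iff.rfl

lemma sumGraph_neg (hθ : Irrational θ) : sumGraph (-θ) = sumGraph θ := by
  ext x y
  simp only [sumGraph_adj, isAvoidedSum_neg_iff hθ]

lemma sumGraph_adj_of_add {x y n : ℕ} (hn : IsAvoidedSum θ n) (hx : 0 < x) (hy : 0 < y)
    (hxy : x ≠ y) (hsum : x + y = n) : (sumGraph θ).Adj x y :=
  ⟨hx, hy, hxy, hsum ▸ hn⟩

variable (hs : IsAvoidedSum θ s) (hsd : IsAvoidedSum θ (s + d)) (hd : 0 < d)
include hs hsd hd

-- `z` and `z - d` have the common neighbour `s + d - z`, unless it coincides with one of them.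
lemma sumGraph_reachable_sub {z : ℕ} (hdz : d < z) (hzs : z ≤ s) :
    (sumGraph θ).Reachable z (z - d) := by
  by_cases h1 : 2 * z = s + d
  · exact (sumGraph_adj_of_add hs (by omega) (by omega) (by omega) (by omega)).reachable
  by_cases h2 : 2 * z = s + 2 * d
  · exact (sumGraph_adj_of_add hsd (by omega) (by omega) (by omega) (by omega)).reachable
  exact (sumGraph_adj_of_add hsd (y := s + d - z) (by omega) (by omega) (by omega)
    (by omega)).reachable.trans
    (sumGraph_adj_of_add hs (by omega) (by omega) (by omega) (by omega)).reachable

lemma exists_sumGraph_reachable_modEq {z : ℕ} (hz : 0 < z) (hzs : z ≤ s) :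
    ∃ w, (sumGraph θ).Reachable z w ∧ 0 < w ∧ w ≤ d ∧ w ≡ z [MOD d] := by
  induction z using Nat.strong_induction_on with
  | _ z ih =>
    by_cases hzd : z ≤ d
    · exact ⟨z, .rfl, hz, hzd, rfl⟩
    obtain ⟨w, hreach, hw, hwd, hmod⟩ := ih (z - d) (by omega) (by omega) (by omega)
    refine ⟨w, (sumGraph_reachable_sub hs hsd hd (by omega) hzs).trans hreach, hw, hwd,
      hmod.trans ?_⟩
    rw [Nat.ModEq, ← Nat.add_mod_right (z - d) d, Nat.sub_add_cancel (by omega)]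

lemma sumGraph_reachable_of_not_dvd (hdvd : d = 1 ∨ ¬ d ∣ s)
    (hlow : ∀ w, 0 < w → w < d → (sumGraph θ).Reachable 1 w) :
    (sumGraph θ).Reachable 1 d := by
  rcases hdvd with rfl | hdvd
  · rfl
  obtain ⟨w, hreach, hw, hwd, hmod⟩ := exists_sumGraph_reachable_modEq hs hsd hd hs.1 le_rfl
  have hwd' : w ≠ d := by
    rintro rfl
    exact hdvd (Nat.dvd_of_mod_eq_zero (by rw [← hmod, Nat.mod_self]))
  have hsd_adj : (sumGraph θ).Adj s d :=
    sumGraph_adj_of_add hsd hs.1 hd (fun h => hdvd (h ▸ dvd_rfl)) rfl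
  exact (hlow w hw (by omega)).trans (hreach.symm.trans hsd_adj.reachable)

lemma sumGraph_reachable_of_isAvoidedSum_pair (hdvd : d = 1 ∨ ¬ d ∣ s)
    (hlow : ∀ w, 0 < w → w < d → (sumGraph θ).Reachable 1 w) {z : ℕ} (hz : 0 < z)
    (hzs : z < s + d) : (sumGraph θ).Reachable 1 z := by
  have hlow' : ∀ w, 0 < w → w ≤ d → (sumGraph θ).Reachable 1 w := fun w hw hwd =>
    (eq_or_lt_of_le hwd).elim (fun h => h ▸ sumGraph_reachable_of_not_dvd hs hsd hd hdvd hlow)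
      (hlow w hw)
  by_cases hzd : z ≤ d
  · exact hlow' z hz hzd
  by_cases hz_s : z ≤ s
  · obtain ⟨w, hreach, hw, hwd, -⟩ := exists_sumGraph_reachable_modEq hs hsd hd hz hz_s
    exact (hlow' w hw hwd).trans hreach.symm
  exact (hlow' (s + d - z) (by omega) (by omega)).trans
    (sumGraph_adj_of_add hsd (by omega) hz (by omega) (by omega)).reachable

end SumGraph

section Doubling

variable {θ : ℝ} {P Q : ℕ} (hθ : Irrational θ)
include hθ

lemma IsExtremalPair.exists_add_mul (h : IsExtremalPair (2 * θ) P Q) (hP : ¬ IsUpper θ P)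
    (hQ : ¬ IsUpper θ Q) :
    ∃ j, IsExtremalPair (2 * θ) P (Q + j * P) ∧ ¬ IsUpper θ (Q + j * P) ∧
      1 < fractMul (2 * θ) P + fractMul (2 * θ) (Q + j * P) := by
  have hvP := fractMul_pos (irrational_two_mul hθ) h.left_pos
  obtain ⟨k, hk⟩ := exists_nat_gt (1 / fractMul (2 * θ) P)
  replace hk : 1 - fractMul (2 * θ) Q < k * fractMul (2 * θ) P := by
    rw [div_lt_iff₀ hvP] at hk
    linarith [fractMul_nonneg (θ := 2 * θ) (x := Q)]
  induction k generalizing Q with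
  | zero =>
    rw [Nat.cast_zero, zero_mul] at hk
    linarith [fractMul_lt_one (θ := 2 * θ) (x := Q)]
  | succ k ih =>
    rcases lt_or_gt_of_ne (fractMul_add_ne_one (irrational_two_mul hθ) h.left_pos (y := Q))
      with hlt | hgt
    · obtain ⟨j, hj⟩ := ih (h.add_right (irrational_two_mul hθ) hlt)
        (not_isUpper_add_of_not_isUpper_of_lt_one hθ h.left_pos h.right_pos hP hQ hlt)
        (by rw [fractMul_add_of_lt hlt]; push_cast at hk; linarith)
      exact ⟨j + 1, by rwa [show Q + (j + 1) * P = P + Q + j * P by ring]⟩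
    · exact ⟨0, by simpa using ⟨h, hQ, hgt⟩⟩

lemma IsExtremalPair.isAvoidedSum_two_mul_or (h : IsExtremalPair (2 * θ) P Q)
    (hsum : 1 < fractMul (2 * θ) P + fractMul (2 * θ) Q) (hPQ : P = Q → Q = 1) :
    IsAvoidedSum θ (2 * (P + Q)) ∨ IsAvoidedSum θ (2 * Q) := by
  have h' := h.add_left (irrational_two_mul hθ) hsum
  have hv := fractMul_add_of_le hsum.le
  rcases lt_or_gt_of_ne (fractMul_add_ne_one (irrational_two_mul hθ) h'.left_pos (y := Q))
    with hlt | hgt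
  · refine Or.inl (isAvoidedSum_two_mul_left hθ h' hlt ?_)
    linarith [h.fractMul_le]
  · rcases eq_or_ne Q 1 with rfl | hQ
    · exact Or.inr isAvoidedSum_two
    refine Or.inr (isAvoidedSum_two_mul_right hθ h' hgt ?_)
    linarith [h.eq_or_lt.resolve_left fun hPQ' => hQ (hPQ hPQ')]

end Doubling

structure IsGoodPair (θ : ℝ) (p q : ℕ) : Prop where
  extremal : IsExtremalPair (2 * θ) p q
  isUpper_left : IsUpper θ p
  not_isUpper_right : ¬ IsUpper θ q
  reachable : ∀ z, 0 < z → z < p + q → (sumGraph θ).Reachable 1 z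

section GoodPair

variable {θ : ℝ} {p q : ℕ} (hθ : Irrational θ)
include hθ

lemma IsGoodPair.neg (h : IsGoodPair θ p q) : IsGoodPair (-θ) q p where
  extremal := h.extremal.two_mul_neg hθ
  isUpper_left := (isUpper_neg_iff hθ h.extremal.right_pos).2 h.not_isUpper_right
  not_isUpper_right := by
    rw [isUpper_neg_iff hθ h.extremal.left_pos]
    exact not_not.2 h.isUpper_left
  reachable z hz hzs := by
    rw [sumGraph_neg hθ]
    exact h.reachable z hz (by omega)

lemma exists_isGoodPair_of_isExtremalPair {P Q₀ : ℕ} (h : IsExtremalPair (2 * θ) P Q₀)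
    (hP : ¬ IsUpper θ P) (hQ₀ : ¬ IsUpper θ Q₀) (hdvd : P = 1 ∨ ¬ P ∣ 2 * Q₀)
    (hlow : ∀ w, 0 < w → w < P → (sumGraph θ).Reachable 1 w) :
    ∃ p q, IsGoodPair θ p q ∧ P < p + q := by
  obtain ⟨j, hPQ, hQ, hsum⟩ := h.exists_add_mul hθ hP hQ₀
  set Q := Q₀ + j * P
  have hQpos := hPQ.right_pos
  replace hdvd : P = 1 ∨ ¬ P ∣ 2 * Q := by
    rwa [mul_add, show 2 * (j * P) = P * (2 * j) by ring, Nat.dvd_add_left (dvd_mul_right P _)]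
  have hext := hPQ.add_left (irrational_two_mul hθ) hsum
  have hup := isUpper_add_of_not_isUpper_of_one_lt hθ hPQ.left_pos hQpos hP hQ hsum
  have hsum' := isAvoidedSum_add hθ hext hup hQ
  obtain ⟨s, hs, hsP, hdvd_s, hle⟩ : ∃ s, IsAvoidedSum θ s ∧ IsAvoidedSum θ (s + P) ∧
      (P = 1 ∨ ¬ P ∣ s) ∧ P + Q + Q ≤ s + P := by
    rcases hPQ.isAvoidedSum_two_mul_or hθ hsum
        (fun hPQ' => hdvd.elim (fun h1 => hPQ' ▸ h1) fun h2 => absurd (hPQ' ▸ dvd_mul_left P 2) h2)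
      with h2 | h2
    · refine ⟨P + Q + Q, hsum', by rwa [show P + Q + Q + P = 2 * (P + Q) by ring], ?_, by omega⟩
      rwa [add_assoc, ← two_mul, Nat.dvd_add_right dvd_rfl]
    · exact ⟨2 * Q, h2, by rwa [show 2 * Q + P = P + Q + Q by ring], hdvd, by omega⟩
  exact ⟨P + Q, Q, ⟨hext, hup, hQ, fun z hz hzs =>
    sumGraph_reachable_of_isAvoidedSum_pair hs hsP hPQ.left_pos hdvd_s hlow hz (by omega)⟩,
    by omega⟩

lemma IsGoodPair.exists_of_one_lt (h : IsGoodPair θ p q)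
    (hsum : 1 < fractMul (2 * θ) p + fractMul (2 * θ) q) :
    ∃ p' q', IsGoodPair θ p' q' ∧ p + q < p' + q' := by
  have hp := h.extremal.left_pos
  have hq := h.extremal.right_pos
  have hndvd : ¬ (p + q) ∣ 2 * q := fun hdvd => by
    have hqp : q = p := by have := Nat.eq_of_dvd_of_lt_two_mul (by omega) hdvd (by omega); omega
    exact h.not_isUpper_right (hqp ▸ h.isUpper_left)
  exact exists_isGoodPair_of_isExtremalPair hθ (h.extremal.add_left (irrational_two_mul hθ) hsum)
    (not_isUpper_add_of_isUpper_of_one_lt hθ hq h.isUpper_left h.not_isUpper_right hsum)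
    h.not_isUpper_right (Or.inr hndvd) h.reachable

lemma IsGoodPair.exists_lt (h : IsGoodPair θ p q) :
    ∃ p' q', IsGoodPair θ p' q' ∧ p + q < p' + q' := by
  rcases lt_or_gt_of_ne (fractMul_add_ne_one (irrational_two_mul hθ) h.extremal.left_pos (y := q))
    with hlt | hgt
  · obtain ⟨p', q', h', hlt'⟩ := (h.neg hθ).exists_of_one_lt hθ.neg (by
      rw [fractMul_two_mul_neg hθ h.extremal.left_pos, fractMul_two_mul_neg hθ h.extremal.right_pos]
      linarith)
    exact ⟨q', p', by simpa using h'.neg hθ.neg, by omega⟩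
  · exact h.exists_of_one_lt hθ hgt

lemma exists_isGoodPair : ∃ p q, IsGoodPair θ p q := by
  have of_not_isUpper_one : ∀ θ, Irrational θ → ¬ IsUpper θ 1 → ∃ p q, IsGoodPair θ p q :=
    fun θ hθ h1 => by
      obtain ⟨p, q, h, -⟩ := exists_isGoodPair_of_isExtremalPair hθ IsExtremalPair.one_one h1 h1
        (Or.inl rfl) fun w hw hlt => by omega
      exact ⟨p, q, h⟩
  by_cases h1 : IsUpper θ 1
  · obtain ⟨p, q, h⟩ :=
      of_not_isUpper_one (-θ) hθ.neg (by rwa [isUpper_neg_iff hθ one_pos, not_not])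
    exact ⟨q, p, by simpa using h.neg hθ.neg⟩
  · exact of_not_isUpper_one θ hθ h1

lemma sumGraph_reachable_one {z : ℕ} (hz : 0 < z) : (sumGraph θ).Reachable 1 z := by
  have unbounded : ∀ N, ∃ p q, IsGoodPair θ p q ∧ N < p + q := by
    intro N
    induction N with
    | zero =>
      obtain ⟨p, q, h⟩ := exists_isGoodPair hθ
      exact ⟨p, q, h, Nat.add_pos_left h.extremal.left_pos q⟩
    | succ N ih =>
      obtain ⟨p, q, h, hN⟩ := ih
      obtain ⟨p', q', h', hlt⟩ := h.exists_lt hθ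
      exact ⟨p', q', h', by omega⟩
  obtain ⟨p, q, h, hzpq⟩ := unbounded z
  exact h.reachable z hz hzpq

end GoodPair

section SignOfE

variable {α : ℝ} (hα : 0 < α) (hirr : Irrational α)
include hα hirr

lemma E_neg_iff {n : ℕ} (hn : 0 < n) : E α n < 0 ↔ IsUpper α⁻¹ n := by
  have hE : E α n = α * (n * α⁻¹ - round ((n : ℝ) * α⁻¹)) := by
    unfold E
    rw [div_eq_mul_inv]
    field_simp
  have hhalf := fractMul_ne_half hirr.inv hn
  rw [hE, show ∀ t : ℝ, α * t < 0 ↔ t < 0 from fun t =>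
    ⟨fun h => neg_of_mul_neg_right h hα.le, mul_neg_of_pos_of_neg hα⟩]
  unfold IsUpper fractMul at *
  unfold round
  split_ifs with hr
  · exact iff_of_false (by linarith [Int.floor_le ((n : ℝ) * α⁻¹)]) (by linarith)
  · refine iff_of_true ?_ ?_
    · linarith [lt_of_le_of_ne (Int.le_ceil _) ((hirr.inv.natCast_mul hn.ne').ne_int _)]
    · exact lt_of_le_of_ne (by linarith) (Ne.symm hhalf)

lemma mem_SsetP_of_isAvoidedSum {s : ℕ+} (hs : IsAvoidedSum α⁻¹ s) : s ∈ SsetP α := by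
  have hmem : ∀ x : ℕ+, x ∈ AsetP α ↔ IsUpper α⁻¹ x := fun x => E_neg_iff hα hirr x.pos
  refine ⟨fun x hx y hy hxy hsum => ?_, fun x hx y hy hxy hsum => ?_⟩
  · exact (hs.2 x y x.pos y.pos (PNat.coe_injective.ne hxy) (by rw [← hsum]; rfl)).1
      ⟨(hmem x).1 hx, (hmem y).1 hy⟩
  · exact (hs.2 x y x.pos y.pos (PNat.coe_injective.ne hxy) (by rw [← hsum]; rfl)).2
      ⟨(hmem x).not.1 hx, (hmem y).not.1 hy⟩

-- `0` is isolated in `sumGraph`, so sending it to `1` is harmless.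
def sumGraphHom : sumGraph α⁻¹ →g G (SsetP α) where
  toFun := Nat.toPNat'
  map_rel' {x y} h := by
    obtain ⟨hx, hy, hxy, hs⟩ := h
    have hcoe : ∀ n : ℕ, 0 < n → (Nat.toPNat' n : ℕ) = n := fun n hn => by
      rw [Nat.toPNat'_coe, if_pos hn]
    refine ⟨fun h => hxy ?_, mem_SsetP_of_isAvoidedSum hα hirr ?_⟩
    · rw [← hcoe x hx, ← hcoe y hy, h]
    · rwa [PNat.add_coe, hcoe x hx, hcoe y hy]

lemma G_SsetP_connected : (G (SsetP α)).Connected := by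
  rw [SimpleGraph.connected_iff_exists_forall_reachable]
  refine ⟨1, fun z => ?_⟩
  have := (sumGraph_reachable_one hirr.inv z.pos).map (sumGraphHom hα hirr)
  rwa [show sumGraphHom hα hirr z = z from PNat.coe_toPNat' z] at this

end SignOfE

end NearestMultiple

/-- `S_α` is uniquely avoidable: `{A_α, B_α}` is the only avoiding partition. -/
theorem stmt18 (α : ℝ) (hα : 1 < α) (hirr : Irrational α) :
    Avoids (AsetP α) (SsetP α) ∧
      ∀ A', Avoids A' (SsetP α) → A' = AsetP α ∨ A' = (AsetP α)ᶜ :=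
  ⟨avoids_AsetP_SsetP α, fun _ hA' => (avoids_AsetP_SsetP α).eq_or_eq_compl hA'
    (NearestMultiple.G_SsetP_connected (by linarith) hirr)⟩
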